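/- arXiv:2508.01363 — 2 statements merged into one kernel-verified Lean document; each statement's English description precedes it below -/
import Mathlib

section
/- Let (X,T) be an NDS, let Z ⊂ X_0 and let f be a potential. Then Q_low(T,f,Z) ≤ P_low(T,f,Z) and Q_up(T,f,Z) ≤ P_up(T,f,Z). If moreover f is equicontinuous, then Q_low(T,f,Z) = P_low(T,f,Z) and Q_up(T,f,Z) = P_up(T,f,Z); that is, the lower and upper topological pressures P_L(T,f,Z) and P_U(T,f,Z) exist. -/
open Filter Set
open scoped ENNReal NNReal

noncomputable section

namespace NDS

variable {X : ℕ → Type*}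

/-- The orbit maps `T_k^j : X k → X (k+j)` of a nonautonomous system. -/
def iterFrom (T : ∀ k, X k → X (k + 1)) (k : ℕ) : ∀ j, X k → X (k + j)
  | 0 => fun x => x
  | j + 1 => fun x => T (k + j) (iterFrom T k j x)

/-- The orbit maps `T^j = T_{j-1} ∘ ⋯ ∘ T_0 : X 0 → X j`. -/
def iter (T : ∀ k, X k → X (k + 1)) : ∀ j, X 0 → X j
  | 0 => fun x => x
  | j + 1 => fun x => T j (iter T j x)

variable [∀ k, MetricSpace (X k)]

/-- The `n`-th Bowen metric on `X 0`:  `d_n^T(x,y) = max_{0 ≤ j ≤ n-1} d_j (T^j x) (T^j y)`. -/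
def bowenDist (T : ∀ k, X k → X (k + 1)) (n : ℕ) (x y : X 0) : ℝ :=
  (((Finset.range n).sup fun j => nndist (iter T j x) (iter T j y) : ℝ≥0) : ℝ)

/-- The open Bowen ball `B_n^T(x, ε)`. -/
def bowenBall (T : ∀ k, X k → X (k + 1)) (n : ℕ) (x : X 0) (ε : ℝ) : Set (X 0) :=
  {y | bowenDist T n x y < ε}

/-- The closed Bowen ball `clB_n^T(x, ε)`. -/
def bowenClosedBall (T : ∀ k, X k → X (k + 1)) (n : ℕ) (x : X 0) (ε : ℝ) : Set (X 0) :=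
  {y | bowenDist T n x y ≤ ε}

/-- Birkhoff sums starting at level `k`:  `S_{k,n}^T f = Σ_{j<n} f_{k+j} ∘ T_k^j`. -/
def birkFrom (T : ∀ k, X k → X (k + 1)) (f : ∀ k, X k → ℝ) (k n : ℕ) (x : X k) : ℝ :=
  ∑ j ∈ Finset.range n, f (k + j) (iterFrom T k j x)

/-- Birkhoff sums `S_n^T f = Σ_{j<n} f_j ∘ T^j` on `X 0`. -/
def birk (T : ∀ k, X k → X (k + 1)) (f : ∀ k, X k → ℝ) (n : ℕ) (x : X 0) : ℝ :=
  ∑ j ∈ Finset.range n, f j (iter T j x)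

/-- A potential `f = {f_k}` is equicontinuous. -/
def EquicontPotential (f : ∀ k, X k → ℝ) : Prop :=
  ∀ ε : ℝ, 0 < ε → ∃ δ : ℝ, 0 < δ ∧
    ∀ k, ∀ x y : X k, dist x y < δ → |f k x - f k y| < ε

/-- The sequence of maps `T = {T_k}` is equicontinuous. -/
def EquicontMaps (T : ∀ k, X k → X (k + 1)) : Prop :=
  ∀ ε : ℝ, 0 < ε → ∃ δ : ℝ, 0 < δ ∧
    ∀ k, ∀ x y : X k, dist x y < δ → dist (T k x) (T k y) < ε

/-- `F` is an `(n,ε)`-spanning set for `Z`. -/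
def IsSpanning (T : ∀ k, X k → X (k + 1)) (n : ℕ) (ε : ℝ) (Z : Set (X 0))
    (F : Finset (X 0)) : Prop :=
  ∀ x ∈ Z, ∃ y ∈ F, bowenDist T n x y ≤ ε

/-- `E` is an `(n,ε)`-separated set for `Z`. -/
def IsSeparated (T : ∀ k, X k → X (k + 1)) (n : ℕ) (ε : ℝ) (Z : Set (X 0))
    (E : Finset (X 0)) : Prop :=
  ↑E ⊆ Z ∧ ∀ x ∈ E, ∀ y ∈ E, x ≠ y → ε < bowenDist T n x y

/-- The partition sum `Σ_{x ∈ F} e^{S_n^T f(x)}` (valued in `ℝ≥0∞`). -/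
def partSum (T : ∀ k, X k → X (k + 1)) (f : ∀ k, X k → ℝ) (n : ℕ) (F : Finset (X 0)) : ℝ≥0∞ :=
  ∑ x ∈ F, ENNReal.ofReal (Real.exp (birk T f n x))

/-- `Q_n(T,f,Z,ε)`, infimum over `(n,ε)`-spanning sets. -/
def Qn (T : ∀ k, X k → X (k + 1)) (f : ∀ k, X k → ℝ) (Z : Set (X 0)) (n : ℕ) (ε : ℝ) : ℝ≥0∞ :=
  ⨅ (F : Finset (X 0)) (_ : IsSpanning T n ε Z F), partSum T f n F

/-- `P_n(T,f,Z,ε)`, supremum over `(n,ε)`-separated sets. -/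
def Pn (T : ∀ k, X k → X (k + 1)) (f : ∀ k, X k → ℝ) (Z : Set (X 0)) (n : ℕ) (ε : ℝ) : ℝ≥0∞ :=
  ⨆ (E : Finset (X 0)) (_ : IsSeparated T n ε Z E), partSum T f n E

/-- `liminf_n (1/n) log u n` (in `EReal`). -/
def lowRate (u : ℕ → ℝ≥0∞) : EReal :=
  Filter.atTop.liminf fun n : ℕ => (((n : ℝ)⁻¹ : ℝ) : EReal) * ENNReal.log (u n)

/-- `limsup_n (1/n) log u n` (in `EReal`). -/
def upRate (u : ℕ → ℝ≥0∞) : EReal :=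
  Filter.atTop.limsup fun n : ℕ => (((n : ℝ)⁻¹ : ℝ) : EReal) * ENNReal.log (u n)

/-- Lower spanning topological pressure `Q_low(T,f,Z)`; the limit as `ε → 0` is realised as a
supremum over `ε > 0`, the quantity being monotone in `ε`. -/
def Qlow (T : ∀ k, X k → X (k + 1)) (f : ∀ k, X k → ℝ) (Z : Set (X 0)) : EReal :=
  ⨆ (ε : ℝ) (_ : 0 < ε), lowRate fun n => Qn T f Z n ε

/-- Upper spanning topological pressure `Q_up(T,f,Z)`. -/
def Qup (T : ∀ k, X k → X (k + 1)) (f : ∀ k, X k → ℝ) (Z : Set (X 0)) : EReal :=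
  ⨆ (ε : ℝ) (_ : 0 < ε), upRate fun n => Qn T f Z n ε

/-- Lower separated topological pressure `P_low(T,f,Z)`. -/
def Plow (T : ∀ k, X k → X (k + 1)) (f : ∀ k, X k → ℝ) (Z : Set (X 0)) : EReal :=
  ⨆ (ε : ℝ) (_ : 0 < ε), lowRate fun n => Pn T f Z n ε

/-- Upper separated topological pressure `P_up(T,f,Z)`. -/
def Pup (T : ∀ k, X k → X (k + 1)) (f : ∀ k, X k → ℝ) (Z : Set (X 0)) : EReal :=
  ⨆ (ε : ℝ) (_ : 0 < ε), upRate fun n => Pn T f Z n ε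

/-- The critical value `inf {s : M s = 0}` of a "measure profile" `M`, as an extended real. -/
def crit (M : ℝ → ℝ≥0∞) : EReal :=
  sInf (Real.toEReal '' {s : ℝ | M s = 0})

/-- The critical value `sup {s : M s = ∞}` of a "measure profile" `M`, as an extended real. -/
def critSup (M : ℝ → ℝ≥0∞) : EReal :=
  sSup (Real.toEReal '' {s : ℝ | M s = ⊤})

/-- A countable family of Bowen balls (recorded by their (center, order) data) which is an
`(N,ε)`-cover of `Z`. -/
def IsBowenCover (T : ∀ k, X k → X (k + 1)) (N : ℕ) (ε : ℝ) (Z : Set (X 0))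
    (C : Set (X 0 × ℕ)) : Prop :=
  C.Countable ∧ (∀ p ∈ C, N ≤ p.2) ∧ Z ⊆ ⋃ p ∈ C, bowenBall T p.2 p.1 ε

/-- A countable disjoint family of closed Bowen balls with centers in `Z` and orders `≥ N`:
an `(N,ε)`-packing of `Z`. -/
def IsBowenPacking (T : ∀ k, X k → X (k + 1)) (N : ℕ) (ε : ℝ) (Z : Set (X 0))
    (P : Set (X 0 × ℕ)) : Prop :=
  P.Countable ∧ (∀ p ∈ P, p.1 ∈ Z ∧ N ≤ p.2) ∧
    ∀ p ∈ P, ∀ q ∈ P, p ≠ q →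
      Disjoint (bowenClosedBall T p.2 p.1 ε) (bowenClosedBall T q.2 q.1 ε)

/-- `Σ_i exp (-n_i s + S_{n_i}^T f (x_i))` over a family of (center, order) pairs. -/
def ballSum (T : ∀ k, X k → X (k + 1)) (f : ∀ k, X k → ℝ) (s : ℝ) (C : Set (X 0 × ℕ)) : ℝ≥0∞ :=
  ∑' p : C, ENNReal.ofReal (Real.exp (-(p.1.2 : ℝ) * s + birk T f p.1.2 p.1.1))

/-- The Hausdorff-type pre-measure `M^s_{N,ε}(T,f,Z)`. -/
def bowenPreMeas (T : ∀ k, X k → X (k + 1)) (f : ∀ k, X k → ℝ) (Z : Set (X 0))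
    (s : ℝ) (N : ℕ) (ε : ℝ) : ℝ≥0∞ :=
  ⨅ (C : Set (X 0 × ℕ)) (_ : IsBowenCover T N ε Z C), ballSum T f s C

/-- `M^s_ε(T,f,Z) = lim_{N → ∞} M^s_{N,ε}(T,f,Z)` (an increasing limit, i.e. a supremum). -/
def bowenMeas (T : ∀ k, X k → X (k + 1)) (f : ∀ k, X k → ℝ) (Z : Set (X 0))
    (s : ℝ) (ε : ℝ) : ℝ≥0∞ :=
  ⨆ N : ℕ, bowenPreMeas T f Z s N ε

/-- `P^B(T,f,Z,ε)`: the critical value of `s ↦ M^s_ε(T,f,Z)`. -/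
def PBe (T : ∀ k, X k → X (k + 1)) (f : ∀ k, X k → ℝ) (Z : Set (X 0)) (ε : ℝ) : EReal :=
  crit fun s => bowenMeas T f Z s ε

/-- The Bowen (Pesin–Pitskel') topological pressure `P^B(T,f,Z)`; the limit as `ε → 0` is
realised as a supremum over `ε > 0` by monotonicity. -/
def PB (T : ∀ k, X k → X (k + 1)) (f : ∀ k, X k → ℝ) (Z : Set (X 0)) : EReal :=
  ⨆ (ε : ℝ) (_ : 0 < ε), PBe T f Z ε

/-- The packing pre-measure `𝒫^s_{N,ε}(T,f,Z)`. -/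
def packPre (T : ∀ k, X k → X (k + 1)) (f : ∀ k, X k → ℝ) (Z : Set (X 0))
    (s : ℝ) (N : ℕ) (ε : ℝ) : ℝ≥0∞ :=
  ⨆ (P : Set (X 0 × ℕ)) (_ : IsBowenPacking T N ε Z P), ballSum T f s P

/-- The packing content `𝒫^s_{∞,ε}(T,f,Z) = lim_{N→∞} 𝒫^s_{N,ε}` (a decreasing limit, i.e. an
infimum). -/
def packContent (T : ∀ k, X k → X (k + 1)) (f : ∀ k, X k → ℝ) (Z : Set (X 0))
    (s : ℝ) (ε : ℝ) : ℝ≥0∞ :=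
  ⨅ N : ℕ, packPre T f Z s N ε

/-- The packing measure `𝒫^s_ε(T,f,Z)`, obtained from the content by countable decompositions. -/
def packMeas (T : ∀ k, X k → X (k + 1)) (f : ∀ k, X k → ℝ) (Z : Set (X 0))
    (s : ℝ) (ε : ℝ) : ℝ≥0∞ :=
  ⨅ (D : ℕ → Set (X 0)) (_ : Z ⊆ ⋃ i, D i), ∑' i, packContent T f (D i) s ε

/-- `P^P(T,f,Z,ε)`: the critical value of `s ↦ 𝒫^s_ε(T,f,Z)`. -/
def PPe (T : ∀ k, X k → X (k + 1)) (f : ∀ k, X k → ℝ) (Z : Set (X 0)) (ε : ℝ) : EReal :=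
  crit fun s => packMeas T f Z s ε

/-- The packing topological pressure `P^P(T,f,Z)`. -/
def PP (T : ∀ k, X k → X (k + 1)) (f : ∀ k, X k → ℝ) (Z : Set (X 0)) : EReal :=
  ⨆ (ε : ℝ) (_ : 0 < ε), PPe T f Z ε

end NDS

/-!
A maximal `(n,ε)`-separated subset of `Z` is `(n,ε)`-spanning, whence `Q_n ≤ P_n`. It exists
and is finite because `d_n^T` is the pullback of the sup metric on the compact product
`∏_{j<n} X_j` under `x ↦ (T^j x)_{j<n}`.

Conversely, let `|f_k x - f_k y| < γ` whenever `d_k(x,y) < δ`, and `ε' < δ`, `2ε' ≤ ε`. Sending each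
point of an `(n,ε)`-separated set to a point of an `(n,ε')`-spanning set at `d_n^T`-distance
`≤ ε'` is injective and changes `S_n^T f` by at most `nγ`, so `P_n(ε) ≤ e^{nγ} Q_n(ε')`. Taking
exponential growth rates gives `P ≤ γ + Q` for every `γ > 0`.
-/

theorem TotallyBounded.packingNumber_ne_top {Y : Type*} [PseudoEMetricSpace Y] {A : Set Y}
    (hA : TotallyBounded A) {ε : ℝ≥0} (hε : ε ≠ 0) : Metric.packingNumber ε A ≠ ⊤ := by
  obtain ⟨N, -, hN, hcover⟩ :=
    Metric.exists_finite_isCover_of_totallyBounded (ε := ε / 2) (by simpa using hε) hA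
  have hpack := Metric.packingNumber_two_mul_le_externalCoveringNumber (ε / 2) A
  rw [mul_div_cancel₀ _ two_ne_zero] at hpack
  exact ne_top_of_le_ne_top (Set.encard_ne_top_iff.2 hN)
    (hpack.trans hcover.externalCoveringNumber_le_encard)

theorem EReal.le_of_forall_pos_le_add {x y : EReal} (h : ∀ γ : ℝ, 0 < γ → x ≤ γ + y) : x ≤ y := by
  induction y using EReal.rec with
  | bot => simpa using h 1 one_pos
  | coe r =>
    refine EReal.le_of_forall_lt_iff_le.1 fun z hz => ?_
    have hrz : r < z := by exact_mod_cast hz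
    calc x ≤ ((z - r : ℝ) : EReal) + r := h (z - r) (by linarith)
      _ = z := by norm_cast; ring
  | top => exact le_top

namespace NDS

section Bowen

variable {X : ℕ → Type*} [∀ k, MetricSpace (X k)] (T : ∀ k, X k → X (k + 1))

def orbitSegment (n : ℕ) (x : X 0) : ∀ j : Fin n, X j :=
  fun j => iter T j x

theorem bowenDist_eq_nndist (n : ℕ) (x y : X 0) :
    bowenDist T n x y = nndist (orbitSegment T n x) (orbitSegment T n y) := by
  rw [bowenDist, nndist_pi_def]
  exact congrArg _ (Finset.sup_fin_univ fun j => nndist (iter T j x) (iter T j y)).symm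

theorem bowenDist_comm (n : ℕ) (x y : X 0) : bowenDist T n x y = bowenDist T n y x := by
  simp only [bowenDist_eq_nndist, nndist_comm]

theorem bowenDist_triangle (n : ℕ) (x y z : X 0) :
    bowenDist T n x z ≤ bowenDist T n x y + bowenDist T n y z := by
  simp only [bowenDist_eq_nndist]
  exact_mod_cast nndist_triangle _ _ _

theorem dist_iter_le_bowenDist {n j : ℕ} (hj : j < n) (x y : X 0) :
    dist (iter T j x) (iter T j y) ≤ bowenDist T n x y := by
  rw [bowenDist_eq_nndist, coe_nndist]
  exact dist_le_pi_dist (orbitSegment T n x) (orbitSegment T n y) ⟨j, hj⟩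

theorem exists_isSeparated_isSpanning [∀ k, CompactSpace (X k)] (n : ℕ) {ε : ℝ} (hε : 0 < ε)
    (Z : Set (X 0)) : ∃ E : Finset (X 0), IsSeparated T n ε Z E ∧ IsSpanning T n ε Z E := by
  lift ε to ℝ≥0 using hε.le
  set A := orbitSegment T n '' Z
  have hA : Metric.packingNumber ε A ≠ ⊤ :=
    (isCompact_univ.totallyBounded.subset (Set.subset_univ A)).packingNumber_ne_top
      (by exact_mod_cast hε.ne')
  set S := Metric.maximalSeparatedSet ε A
  have hS : S.Finite := Set.encard_ne_top_iff.1 (by rwa [Metric.encard_maximalSeparatedSet hA])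
  obtain ⟨E, hEZ, hE⟩ := Set.SurjOn.exists_bijOn_subset
    (Metric.maximalSeparatedSet_subset : Set.SurjOn (orbitSegment T n) Z S)
  have hEfin : E.Finite := Set.Finite.of_finite_image (hE.image_eq ▸ hS) hE.injOn
  refine ⟨hEfin.toFinset, ⟨by simpa using hEZ, ?_⟩, ?_⟩
  · simp only [Set.Finite.mem_toFinset]
    intro x hx y hy hxy
    have : (ε : ℝ≥0∞) < edist (orbitSegment T n x) (orbitSegment T n y) :=
      Metric.isSeparated_maximalSeparatedSet (hE.mapsTo hx) (hE.mapsTo hy) (hE.injOn.ne hx hy hxy)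
    rw [bowenDist_eq_nndist]
    rwa [edist_nndist, ENNReal.coe_lt_coe, ← NNReal.coe_lt_coe] at this
  · intro x hx
    obtain ⟨s, hs, hxs⟩ := Metric.isCover_maximalSeparatedSet hA (Set.mem_image_of_mem _ hx)
    obtain ⟨y, hy, rfl⟩ := hE.surjOn hs
    refine ⟨y, hEfin.mem_toFinset.2 hy, ?_⟩
    rw [bowenDist_eq_nndist]
    exact_mod_cast edist_le_coe.1 hxs

theorem birk_le_add_of_bowenDist_lt (f : ∀ k, X k → ℝ) {γ δ : ℝ}
    (hδ : ∀ k, ∀ x y : X k, dist x y < δ → |f k x - f k y| < γ) {n : ℕ} {x y : X 0}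
    (hxy : bowenDist T n x y < δ) : birk T f n x ≤ n * γ + birk T f n y := by
  have hterm : ∀ j ∈ Finset.range n, f j (iter T j x) ≤ γ + f j (iter T j y) := fun j hj =>
    have hd := (dist_iter_le_bowenDist T (Finset.mem_range.1 hj) x y).trans_lt hxy
    by linarith [(abs_lt.1 (hδ j _ _ hd)).2]
  calc birk T f n x ≤ ∑ j ∈ Finset.range n, (γ + f j (iter T j y)) := Finset.sum_le_sum hterm
    _ = n * γ + birk T f n y := by
      rw [Finset.sum_add_distrib, Finset.sum_const, Finset.card_range, nsmul_eq_mul, birk]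

theorem partSum_le_exp_mul_partSum (f : ∀ k, X k → ℝ) {n : ℕ} {ε ε' c : ℝ} (hε : 2 * ε' ≤ ε)
    {Z : Set (X 0)} {E F : Finset (X 0)} (hE : IsSeparated T n ε Z E)
    (hF : IsSpanning T n ε' Z F)
    (hbirk : ∀ x y, bowenDist T n x y ≤ ε' → birk T f n x ≤ c + birk T f n y) :
    partSum T f n E ≤ ENNReal.ofReal (Real.exp c) * partSum T f n F := by
  classical
  choose! g hgF hg using fun x (hx : x ∈ E) => hF x (hE.1 hx)
  have hinj : Set.InjOn g E := fun a ha b hb hab => by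
    by_contra hne
    have hga : bowenDist T n a (g b) ≤ ε' := hab ▸ hg a ha
    have hgb : bowenDist T n (g b) b ≤ ε' := bowenDist_comm T n b (g b) ▸ hg b hb
    linarith [bowenDist_triangle T n a (g b) b, hE.2 a ha b hb hne]
  calc partSum T f n E
      ≤ ∑ x ∈ E, ENNReal.ofReal (Real.exp c) * ENNReal.ofReal (Real.exp (birk T f n (g x))) := by
        refine Finset.sum_le_sum fun x hx => ?_
        rw [← ENNReal.ofReal_mul (Real.exp_nonneg _), ← Real.exp_add]
        exact ENNReal.ofReal_le_ofReal (Real.exp_le_exp.2 (hbirk x (g x) (hg x hx)))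
    _ = ENNReal.ofReal (Real.exp c) * partSum T f n (E.image g) := by
        rw [← Finset.mul_sum, partSum, Finset.sum_image hinj]
    _ ≤ ENNReal.ofReal (Real.exp c) * partSum T f n F :=
        mul_le_mul_right (Finset.sum_le_sum_of_subset (Finset.image_subset_iff.2 hgF)) _

theorem Qn_le_Pn [∀ k, CompactSpace (X k)] (f : ∀ k, X k → ℝ) (Z : Set (X 0)) (n : ℕ) {ε : ℝ}
    (hε : 0 < ε) : Qn T f Z n ε ≤ Pn T f Z n ε := by
  obtain ⟨E, hsep, hspan⟩ := exists_isSeparated_isSpanning T n hε Z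
  exact (iInf₂_le E hspan).trans (le_iSup₂ (f := fun E _ => partSum T f n E) E hsep)

theorem Pn_le_exp_mul_Qn (f : ∀ k, X k → ℝ) (Z : Set (X 0)) (n : ℕ) {ε ε' c : ℝ}
    (hε : 2 * ε' ≤ ε) (hbirk : ∀ x y, bowenDist T n x y ≤ ε' → birk T f n x ≤ c + birk T f n y) :
    Pn T f Z n ε ≤ ENNReal.ofReal (Real.exp c) * Qn T f Z n ε' := by
  have hc₀ : ENNReal.ofReal (Real.exp c) ≠ 0 := by simpa using Real.exp_pos c
  refine iSup₂_le fun E hE => ?_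
  simp only [Qn, ENNReal.mul_iInf_of_ne hc₀ ENNReal.ofReal_ne_top]
  exact le_iInf₂ fun F hF => partSum_le_exp_mul_partSum T f hε hE hF hbirk

theorem exists_Pn_le_exp_mul_Qn {f : ∀ k, X k → ℝ} (hf : EquicontPotential f) (Z : Set (X 0))
    {γ : ℝ} (hγ : 0 < γ) {ε : ℝ} (hε : 0 < ε) :
    ∃ ε' : ℝ, 0 < ε' ∧ ∀ n : ℕ,
      Pn T f Z n ε ≤ ENNReal.ofReal (Real.exp (n * γ)) * Qn T f Z n ε' := by
  obtain ⟨δ, hδ, hfδ⟩ := hf γ hγ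
  refine ⟨min (δ / 2) (ε / 2), by positivity, fun n => Pn_le_exp_mul_Qn T f Z n ?_ ?_⟩
  · linarith [min_le_right (δ / 2) (ε / 2)]
  · intro x y hxy
    exact birk_le_add_of_bowenDist_lt T f hfδ
      (hxy.trans_lt ((min_le_left _ _).trans_lt (by linarith)))

end Bowen

theorem lowRate_mono : Monotone lowRate := fun _ _ h =>
  liminf_le_liminf (Eventually.of_forall fun n =>
    mul_le_mul_of_nonneg_left (ENNReal.log_monotone (h n)) (by positivity))

theorem upRate_mono : Monotone upRate := fun _ _ h =>
  limsup_le_limsup (Eventually.of_forall fun n =>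
    mul_le_mul_of_nonneg_left (ENNReal.log_monotone (h n)) (by positivity))

theorem inv_mul_log_le_add {γ : ℝ} (hγ : 0 ≤ γ) (n : ℕ) {a b : ℝ≥0∞}
    (h : a ≤ ENNReal.ofReal (Real.exp (n * γ)) * b) :
    (((n : ℝ)⁻¹ : ℝ) : EReal) * ENNReal.log a ≤ γ + (((n : ℝ)⁻¹ : ℝ) : EReal) * ENNReal.log b := by
  have hn : (0 : EReal) ≤ (((n : ℝ)⁻¹ : ℝ) : EReal) := by exact_mod_cast inv_nonneg.2 n.cast_nonneg
  have hlog : ENNReal.log a ≤ ((n * γ : ℝ) : EReal) + ENNReal.log b := by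
    refine (ENNReal.log_monotone h).trans_eq ?_
    rw [ENNReal.log_mul_add, ENNReal.log_ofReal_of_pos (Real.exp_pos _), Real.log_exp]
  -- at `n = 0` the left side is `0⁻¹ * 0 = 0`, which is why `0 ≤ γ` is assumed
  have hγn : (n : ℝ)⁻¹ * (n * γ) ≤ γ := by
    rcases eq_or_ne (n : ℝ) 0 with h0 | h0
    · simpa [h0] using hγ
    · rw [inv_mul_cancel_left₀ h0]
  calc (((n : ℝ)⁻¹ : ℝ) : EReal) * ENNReal.log a
      ≤ (((n : ℝ)⁻¹ : ℝ) : EReal) * (((n * γ : ℝ) : EReal) + ENNReal.log b) :=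
        mul_le_mul_of_nonneg_left hlog hn
    _ = (((n : ℝ)⁻¹ * (n * γ) : ℝ) : EReal) + (((n : ℝ)⁻¹ : ℝ) : EReal) * ENNReal.log b := by
        rw [EReal.left_distrib_of_nonneg_of_ne_top hn (EReal.coe_ne_top _), ← EReal.coe_mul]
    _ ≤ γ + (((n : ℝ)⁻¹ : ℝ) : EReal) * ENNReal.log b :=
        add_le_add (by exact_mod_cast hγn) le_rfl

theorem lowRate_le_add {γ : ℝ} (hγ : 0 ≤ γ) {u v : ℕ → ℝ≥0∞}
    (h : ∀ n : ℕ, u n ≤ ENNReal.ofReal (Real.exp (n * γ)) * v n) :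
    lowRate u ≤ γ + lowRate v := by
  refine (liminf_le_liminf (Eventually.of_forall fun n => inv_mul_log_le_add hγ n (h n))).trans ?_
  refine (EReal.liminf_add_le (u := fun _ : ℕ => (γ : EReal)) (.inl (by simp))
    (.inl (by simp))).trans_eq ?_
  rw [limsup_const]
  rfl

theorem upRate_le_add {γ : ℝ} (hγ : 0 ≤ γ) {u v : ℕ → ℝ≥0∞}
    (h : ∀ n : ℕ, u n ≤ ENNReal.ofReal (Real.exp (n * γ)) * v n) :
    upRate u ≤ γ + upRate v := by
  refine (limsup_le_limsup (Eventually.of_forall fun n => inv_mul_log_le_add hγ n (h n))).trans ?_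
  refine (EReal.limsup_add_le (u := fun _ : ℕ => (γ : EReal)) (.inl (by simp))
    (.inl (by simp))).trans_eq ?_
  rw [limsup_const]
  rfl

theorem iSup_pos_le_iSup_pos_of_le_exp_mul {R : (ℕ → ℝ≥0∞) → EReal}
    (hR : ∀ γ : ℝ, 0 < γ → ∀ u v : ℕ → ℝ≥0∞,
      (∀ n : ℕ, u n ≤ ENNReal.ofReal (Real.exp (n * γ)) * v n) → R u ≤ γ + R v)
    {u v : ℝ → ℕ → ℝ≥0∞}
    (huv : ∀ γ : ℝ, 0 < γ → ∀ ε : ℝ, 0 < ε → ∃ ε' : ℝ, 0 < ε' ∧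
      ∀ n : ℕ, u ε n ≤ ENNReal.ofReal (Real.exp (n * γ)) * v ε' n) :
    ⨆ (ε : ℝ) (_ : 0 < ε), R (u ε) ≤ ⨆ (ε : ℝ) (_ : 0 < ε), R (v ε) := by
  refine EReal.le_of_forall_pos_le_add fun γ hγ => iSup₂_le fun ε hε => ?_
  obtain ⟨ε', hε', hn⟩ := huv γ hγ ε hε
  exact (hR γ hγ _ _ hn).trans
    (add_le_add_right (le_iSup₂ (f := fun ε (_ : 0 < ε) => R (v ε)) ε' hε') _)

end NDS

theorem spanning_vs_separated_pressures_general {X : ℕ → Type*} [∀ k, MetricSpace (X k)]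
    [∀ k, CompactSpace (X k)] (T : ∀ k, X k → X (k + 1))
    (f : ∀ k, X k → ℝ) (Z : Set (X 0)) :
    (NDS.Qlow T f Z ≤ NDS.Plow T f Z ∧ NDS.Qup T f Z ≤ NDS.Pup T f Z) ∧
      (NDS.EquicontPotential f →
        NDS.Qlow T f Z = NDS.Plow T f Z ∧ NDS.Qup T f Z = NDS.Pup T f Z) := by
  have hQP_low : NDS.Qlow T f Z ≤ NDS.Plow T f Z :=
    iSup₂_mono fun ε hε => NDS.lowRate_mono fun n => NDS.Qn_le_Pn T f Z n hε
  have hQP_up : NDS.Qup T f Z ≤ NDS.Pup T f Z :=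
    iSup₂_mono fun ε hε => NDS.upRate_mono fun n => NDS.Qn_le_Pn T f Z n hε
  refine ⟨⟨hQP_low, hQP_up⟩, fun hf => ⟨hQP_low.antisymm ?_, hQP_up.antisymm ?_⟩⟩
  · exact NDS.iSup_pos_le_iSup_pos_of_le_exp_mul (fun γ hγ _ _ => NDS.lowRate_le_add hγ.le)
      fun γ hγ ε hε => NDS.exists_Pn_le_exp_mul_Qn T hf Z hγ hε
  · exact NDS.iSup_pos_le_iSup_pos_of_le_exp_mul (fun γ hγ _ _ => NDS.upRate_le_add hγ.le)
      fun γ hγ ε hε => NDS.exists_Pn_le_exp_mul_Qn T hf Z hγ hε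

/-- For any NDS `(X,T)`, subset `Z ⊆ X 0` and potential `f`, one has
`Q_low ≤ P_low` and `Q_up ≤ P_up`; if moreover `f` is equicontinuous then
`Q_low = P_low` and `Q_up = P_up`, i.e. the lower and upper topological pressures exist. -/
theorem spanning_vs_separated_pressures {X : ℕ → Type*} [∀ k, MetricSpace (X k)]
    [∀ k, CompactSpace (X k)] (T : ∀ k, X k → X (k + 1)) (hT : ∀ k, Continuous (T k))
    (f : ∀ k, X k → ℝ) (hf : ∀ k, Continuous (f k)) (Z : Set (X 0)) :
    (NDS.Qlow T f Z ≤ NDS.Plow T f Z ∧ NDS.Qup T f Z ≤ NDS.Pup T f Z) ∧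
      (NDS.EquicontPotential f →
        NDS.Qlow T f Z = NDS.Plow T f Z ∧ NDS.Qup T f Z = NDS.Pup T f Z) :=
  spanning_vs_separated_pressures_general T f Z
end
end

section
/- Let (X,T) be an NDS, Z ⊂ X_0, and let f be an equicontinuous potential. Then the Bowen pressure equals the weighted-cover pressure: P^B(T,f,Z) = lim_{ε→0} P^{BW}(T,f,Z,ε), where P^{BW}(T,f,Z,ε) = inf{s : 𝒲^s_ε(T,f,Z)=0} = sup{s : 𝒲^s_ε(T,f,Z)=+∞} and 𝒲^s_ε is defined from weighted covers as below. -/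
open Filter Set
open scoped ENNReal NNReal

noncomputable section

namespace NDS

variable {X : ℕ → Type*} [∀ k, MetricSpace (X k)]

/-- `{(B_{n i}^T(x i, ε), c i)}_{i : ι}` is a weighted `(N,ε)`-cover of `Z`: the weights are
positive, the orders are `≥ N`, and `Σ_i c_i χ_{B_i} ≥ χ_Z` pointwise. -/
def IsWeightedCover (T : ∀ k, X k → X (k + 1)) (N : ℕ) (ε : ℝ) (Z : Set (X 0))
    {ι : Type} (x : ι → X 0) (n : ι → ℕ) (c : ι → ℝ) : Prop :=
  (∀ i, 0 < c i) ∧ (∀ i, N ≤ n i) ∧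
    ∀ z ∈ Z, (1 : ℝ≥0∞) ≤
      ∑' i, (bowenBall T (n i) (x i) ε).indicator (fun _ => ENNReal.ofReal (c i)) z

/-- `𝒲^s_{N,ε}(T,f,Z)`: infimum of `Σ_i c_i exp(-n_i s + S_{n_i}^T f(x_i))` over all countable
weighted `(N,ε)`-covers of `Z`. -/
def wMeasPre (T : ∀ k, X k → X (k + 1)) (f : ∀ k, X k → ℝ) (Z : Set (X 0))
    (s : ℝ) (N : ℕ) (ε : ℝ) : ℝ≥0∞ :=
  ⨅ (ι : Type) (_ : Countable ι) (x : ι → X 0) (n : ι → ℕ) (c : ι → ℝ)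
    (_ : IsWeightedCover T N ε Z x n c),
    ∑' i, ENNReal.ofReal (c i) *
      ENNReal.ofReal (Real.exp (-(n i : ℝ) * s + birk T f (n i) (x i)))

/-- `𝒲^s_ε(T,f,Z) = lim_{N→∞} 𝒲^s_{N,ε}(T,f,Z)` (an increasing limit, i.e. a supremum). -/
def wMeas (T : ∀ k, X k → X (k + 1)) (f : ∀ k, X k → ℝ) (Z : Set (X 0))
    (s : ℝ) (ε : ℝ) : ℝ≥0∞ :=
  ⨆ N : ℕ, wMeasPre T f Z s N ε

/-- The weighted-cover pressure `P^{BW}(T,f,Z,ε)`. -/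
def PBW (T : ∀ k, X k → X (k + 1)) (f : ∀ k, X k → ℝ) (Z : Set (X 0)) (ε : ℝ) : EReal :=
  crit fun s => wMeas T f Z s ε

end NDS

/-! Every Bowen cover is a weighted cover with unit weights, so `P^{BW}(ε) ≤ P^B(ε)`. Conversely,
split a weighted `(N,ε)`-cover into the strata `n_i = m` and put `r = e^{-η}`. The thresholds
`(1 - r) r^m` sum to `1`, so every `z ∈ Z` lies in a stratum whose weight at `z` is at least its
threshold. A maximal `2ε`-separated set (for `d_m`) of such points is covered by `3ε`-Bowen balls
around it, and each `ε`-ball of the stratum contains at most one of its points; by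
equicontinuity of `f` the Birkhoff sums at those points exceed those at the centres by at most
`mη`, and the factor `r^m` absorbs this. Hence `M^{s+2η}_{N,3ε} ≤ (1 - r)⁻¹ 𝒲^s_{N,ε}`, i.e.
`P^B(3ε) ≤ P^{BW}(ε) + 2η`. -/

theorem EReal.le_of_forall_pos_le_add_s4 {a b : EReal} (h : ∀ d : ℝ, 0 < d → a ≤ b + d) :
    a ≤ b := by
  refine EReal.le_of_forall_lt_iff_le.1 fun z hz => ?_
  induction b using EReal.rec with
  | bot =>
    have ha := h 1 one_pos
    rw [EReal.bot_add, le_bot_iff] at ha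
    exact ha ▸ bot_le
  | coe b =>
    have ha := h (z - b) (by simpa using hz)
    rwa [← EReal.coe_add, add_sub_cancel] at ha
  | top => exact absurd hz not_top_lt

theorem ENNReal.exists_le_of_one_le_tsum {ι : Type*} [Nonempty ι] {a s : ι → ℝ≥0∞}
    (ha : ∑' i, a i = 1) (hs : 1 ≤ ∑' i, s i) : ∃ i, a i ≤ s i := by
  by_contra! hlt
  have hfin : ∑' i, s i ≠ ⊤ :=
    ne_top_of_le_ne_top (ha ▸ ENNReal.one_ne_top) (ENNReal.tsum_le_tsum fun i => (hlt i).le)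
  have := ENNReal.tsum_lt_tsum hfin (fun i => (hlt i).le) (hlt (Classical.arbitrary ι))
  exact (this.trans_eq ha).not_ge hs

theorem ENNReal.tsum_indicator_le_of_subsingleton {α : Type*} {E B : Set α} {g : α → ℝ≥0∞}
    {b : ℝ≥0∞} (hEB : (E ∩ B).Subsingleton) (hg : ∀ u ∈ E ∩ B, g u ≤ b) :
    ∑' u : E, B.indicator g u ≤ b := by
  rw [tsum_subtype E, Set.indicator_indicator, ← tsum_subtype]
  rcases hEB.eq_empty_or_singleton with h | ⟨u, h⟩
  · simp [h]
  · rw [h, tsum_singleton]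
    exact hg u (h ▸ rfl)

theorem ENNReal.ofReal_exp_neg_lt_one {η : ℝ} (hη : 0 < η) : ENNReal.ofReal (Real.exp (-η)) < 1 :=
  ENNReal.ofReal_lt_one.2 (Real.exp_lt_one_iff.2 (neg_lt_zero.2 hη))

theorem Set.exists_maximal_pairwise_subset {α : Type*} (r : α → α → Prop) (Y : Set α) :
    ∃ E ⊆ Y, E.Pairwise r ∧ ∀ z ∈ Y, z ∉ E → ∃ u ∈ E, ¬(r z u ∧ r u z) := by
  obtain ⟨E, hE⟩ := zorn_subset {E | E ⊆ Y ∧ E.Pairwise r} fun ch hch hchain =>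
    ⟨⋃₀ ch, ⟨sUnion_subset fun s hs => (hch hs).1,
      (pairwise_sUnion hchain.directedOn).2 fun s hs => (hch hs).2⟩,
      fun s hs => subset_sUnion_of_mem hs⟩
  refine ⟨E, hE.prop.1, hE.prop.2, fun z hzY hzE => ?_⟩
  by_contra! hall
  have hins : insert z E ∈ {E | E ⊆ Y ∧ E.Pairwise r} :=
    ⟨insert_subset hzY hE.prop.1, hE.prop.2.insert_of_notMem hzE hall⟩
  exact hzE (hE.eq_of_subset hins (subset_insert z E) ▸ mem_insert z E)

namespace NDS

section Critical

variable {M M' : ℝ → ℝ≥0∞}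

theorem crit_mono (h : M' ≤ M) : crit M' ≤ crit M :=
  sInf_le_sInf <| image_mono fun s hs => le_antisymm ((h s).trans_eq hs) bot_le

theorem crit_le_crit_add (d : ℝ) (h : ∀ s, M s = 0 → M' (s + d) = 0) :
    crit M' ≤ crit M + d := by
  rw [← EReal.sub_le_iff_le_add (.inl (EReal.coe_ne_bot d)) (.inl (EReal.coe_ne_top d))]
  refine le_sInf ?_
  rintro _ ⟨s, hs, rfl⟩
  exact EReal.sub_le_of_le_add (sInf_le ⟨s + d, h s hs, EReal.coe_add s d⟩)

end Critical

section BowenMetric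

variable {X : ℕ → Type*} [∀ k, MetricSpace (X k)] (T : ∀ k, X k → X (k + 1))

theorem bowenDist_self (n : ℕ) (x : X 0) : bowenDist T n x x = 0 := by
  simp [bowenDist]

theorem bowenBall_mono {n : ℕ} {x : X 0} {ε ε' : ℝ} (h : ε ≤ ε') :
    bowenBall T n x ε ⊆ bowenBall T n x ε' :=
  fun _ hy => lt_of_lt_of_le hy h

theorem birk_le_birk_add {f : ∀ k, X k → ℝ} {ε η : ℝ}
    (hf : ∀ k, ∀ x y : X k, dist x y < ε → |f k x - f k y| < η)
    {n : ℕ} {x y : X 0} (h : bowenDist T n x y < ε) :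
    birk T f n y ≤ birk T f n x + n * η := by
  have hterm : ∀ j ∈ Finset.range n, f j (iter T j y) ≤ f j (iter T j x) + η := fun j hj => by
    have hd := (dist_iter_le_bowenDist T (Finset.mem_range.1 hj) x y).trans_lt h
    linarith [(abs_lt.1 (hf j _ _ hd)).1]
  calc birk T f n y ≤ ∑ j ∈ Finset.range n, (f j (iter T j x) + η) := Finset.sum_le_sum hterm
    _ = birk T f n x + n * η := by simp [birk, Finset.sum_add_distrib, mul_comm]

theorem inter_bowenBall_subsingleton {n : ℕ} {ε : ℝ} {E : Set (X 0)}
    (hE : E.Pairwise fun u v => 2 * ε < bowenDist T n u v) (x : X 0) :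
    (E ∩ bowenBall T n x ε).Subsingleton := by
  rintro u ⟨huE, hu⟩ v ⟨hvE, hv⟩
  by_contra huv
  have htri := bowenDist_triangle T n u x v
  rw [bowenDist_comm T n u x] at htri
  have hu : bowenDist T n x u < ε := hu
  have hv : bowenDist T n x v < ε := hv
  exact (hE huE hvE huv).not_ge (by linarith)

theorem countable_of_pairwise_of_subset_iUnion_bowenBall {κ : Type*} [Countable κ]
    {n : ℕ} {ε : ℝ} {E : Set (X 0)} (hE : E.Pairwise fun u v => 2 * ε < bowenDist T n u v)
    {y : κ → X 0} (hEy : E ⊆ ⋃ i, bowenBall T n (y i) ε) : E.Countable := by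
  have hsub : E ⊆ ⋃ i, E ∩ bowenBall T n (y i) ε := fun u hu => by
    obtain ⟨i, hi⟩ := mem_iUnion.1 (hEy hu)
    exact mem_iUnion.2 ⟨i, hu, hi⟩
  exact (countable_iUnion fun i => (inter_bowenBall_subsingleton T hE (y i)).countable).mono hsub

end BowenMetric

section BallSums

variable {X : ℕ → Type*} (T : ∀ k, X k → X (k + 1))

def ballTerm (f : ∀ k, X k → ℝ) (s : ℝ) (n : ℕ) (x : X 0) : ℝ≥0∞ :=
  ENNReal.ofReal (Real.exp (-(n : ℝ) * s + birk T f n x))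

theorem ballSum_eq_tsum_tsum (f : ∀ k, X k → ℝ) (s : ℝ) (E : ℕ → Set (X 0)) :
    ballSum T f s {p | p.1 ∈ E p.2} = ∑' m, ∑' u : E m, ballTerm T f s m u := by
  let e : (Σ m, E m) ≃ {p : X 0 × ℕ | p.1 ∈ E p.2} :=
    { toFun := fun p => ⟨(p.2, p.1), p.2.2⟩
      invFun := fun q => ⟨q.1.2, q.1.1, q.2⟩
      left_inv := fun _ => rfl
      right_inv := fun _ => rfl }
  rw [ballSum, ← e.tsum_eq, ENNReal.tsum_sigma']
  rfl

end BallSums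

section WeightedCover

variable {X : ℕ → Type*} [∀ k, MetricSpace (X k)] (T : ∀ k, X k → X (k + 1))

theorem ballTerm_add_le {f : ∀ k, X k → ℝ} {ε η : ℝ}
    (hf : ∀ k, ∀ x y : X k, dist x y < ε → |f k x - f k y| < η)
    {n : ℕ} {x y : X 0} (h : bowenDist T n x y < ε) (s : ℝ) :
    ballTerm T f (s + 2 * η) n y ≤ ENNReal.ofReal (Real.exp (-η)) ^ n * ballTerm T f s n x := by
  rw [ballTerm, ballTerm, ← ENNReal.ofReal_pow (Real.exp_nonneg _), ← Real.exp_nat_mul,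
    ← ENNReal.ofReal_mul (Real.exp_nonneg _), ← Real.exp_add]
  refine ENNReal.ofReal_le_ofReal (Real.exp_le_exp.2 ?_)
  linarith [birk_le_birk_add T hf h]

def IsSeparatedNet (n : ℕ) (ρ : ℝ) (Y E : Set (X 0)) : Prop :=
  E ⊆ Y ∧ E.Pairwise (fun u v => ρ < bowenDist T n u v) ∧ ∀ z ∈ Y, ∃ u ∈ E, bowenDist T n u z ≤ ρ

theorem exists_isSeparatedNet (n : ℕ) {ρ : ℝ} (hρ : 0 ≤ ρ) (Y : Set (X 0)) :
    ∃ E, IsSeparatedNet T n ρ Y E := by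
  obtain ⟨E, hEY, hE, hmax⟩ :=
    Set.exists_maximal_pairwise_subset (fun u v => ρ < bowenDist T n u v) Y
  refine ⟨E, hEY, hE, fun z hz => ?_⟩
  by_cases hzE : z ∈ E
  · exact ⟨z, hzE, (bowenDist_self T n z).trans_le hρ⟩
  · obtain ⟨u, hu, h⟩ := hmax z hz hzE
    rw [bowenDist_comm T n z u, and_self, not_lt] at h
    exact ⟨u, hu, h⟩

variable (ε : ℝ) {ι : Type} (x : ι → X 0) (n : ι → ℕ) (c : ι → ℝ)

def stratumWeight (m : ℕ) (z : X 0) : ℝ≥0∞ :=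
  ∑' i : n ⁻¹' {m}, (bowenBall T (n i) (x i) ε).indicator (fun _ => ENNReal.ofReal (c i)) z

theorem tsum_stratumWeight (z : X 0) :
    ∑' m, stratumWeight T ε x n c m z =
      ∑' i, (bowenBall T (n i) (x i) ε).indicator (fun _ => ENNReal.ofReal (c i)) z :=
  ENNReal.tsum_fiberwise
    (fun i => (bowenBall T (n i) (x i) ε).indicator (fun _ => ENNReal.ofReal (c i)) z) n

variable {T ε x n c}

theorem exists_mem_bowenBall_of_stratumWeight_ne_zero {m : ℕ} {z : X 0}
    (h : stratumWeight T ε x n c m z ≠ 0) : ∃ i, n i = m ∧ z ∈ bowenBall T m (x i) ε := by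
  obtain ⟨⟨i, rfl⟩, hi⟩ := not_forall.1 (mt ENNReal.tsum_eq_zero.2 h)
  exact ⟨i, rfl, Set.mem_of_indicator_ne_zero hi⟩

theorem mul_tsum_le_of_le_stratumWeight {m : ℕ} {E : Set (X 0)}
    (hE : E.Pairwise fun u v => 2 * ε < bowenDist T m u v) {a : ℝ≥0∞}
    (ha : ∀ u ∈ E, a ≤ stratumWeight T ε x n c m u) {g : X 0 → ℝ≥0∞} {G : ι → ℝ≥0∞}
    (hg : ∀ i, n i = m → ∀ u ∈ bowenBall T m (x i) ε, g u ≤ G i) :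
    a * ∑' u : E, g u ≤ ∑' i : n ⁻¹' {m}, ENNReal.ofReal (c i) * G i := by
  calc a * ∑' u : E, g u = ∑' u : E, a * g u := ENNReal.tsum_mul_left.symm
    _ ≤ ∑' u : E, stratumWeight T ε x n c m u * g u :=
        ENNReal.tsum_le_tsum fun u => mul_le_mul_left (ha u u.2) _
    _ = ∑' i : n ⁻¹' {m}, ∑' u : E,
          (bowenBall T m (x i) ε).indicator (fun u => ENNReal.ofReal (c i) * g u) u := by
        simp_rw [stratumWeight, ← ENNReal.tsum_mul_right]
        rw [ENNReal.tsum_comm]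
        refine tsum_congr fun ⟨i, hi⟩ => tsum_congr fun u => ?_
        rw [Set.indicator_mul_left, show n i = m from hi]
    _ ≤ ∑' i : n ⁻¹' {m}, ENNReal.ofReal (c i) * G i :=
        ENNReal.tsum_le_tsum fun i => ENNReal.tsum_indicator_le_of_subsingleton
          (inter_bowenBall_subsingleton T hE _) fun u hu => mul_le_mul_right (hg i i.2 u hu.2) _

end WeightedCover

section KeyEstimate

variable {X : ℕ → Type*} [∀ k, MetricSpace (X k)] {T : ∀ k, X k → X (k + 1)}
  {f : ∀ k, X k → ℝ} {ε η : ℝ} {ι : Type} {x : ι → X 0} {n : ι → ℕ} {c : ι → ℝ}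

theorem tsum_ballTerm_le (hη : 0 < η)
    (hf : ∀ k, ∀ x y : X k, dist x y < ε → |f k x - f k y| < η) (s : ℝ) {m : ℕ}
    {E : Set (X 0)} (hE : E.Pairwise fun u v => 2 * ε < bowenDist T m u v)
    (hEw : ∀ u ∈ E, (1 - ENNReal.ofReal (Real.exp (-η))) * ENNReal.ofReal (Real.exp (-η)) ^ m ≤
      stratumWeight T ε x n c m u) :
    ∑' u : E, ballTerm T f (s + 2 * η) m u ≤ (1 - ENNReal.ofReal (Real.exp (-η)))⁻¹ *
      ∑' i : n ⁻¹' {m}, ENNReal.ofReal (c i) * ballTerm T f s (n i) (x i) := by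
  set r := ENNReal.ofReal (Real.exp (-η))
  have hr0 : r ^ m ≠ 0 := pow_ne_zero _ (ENNReal.ofReal_pos.2 (Real.exp_pos _)).ne'
  have hrtop : r ^ m ≠ ⊤ := ENNReal.pow_ne_top ENNReal.ofReal_ne_top
  have h1r : 1 - r ≠ 0 := (tsub_pos_of_lt (ENNReal.ofReal_exp_neg_lt_one hη)).ne'
  have key : r ^ m * ((∑' u : E, ballTerm T f (s + 2 * η) m u) * (1 - r)) ≤
      r ^ m * ∑' i : n ⁻¹' {m}, ENNReal.ofReal (c i) * ballTerm T f s (n i) (x i) :=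
    calc r ^ m * ((∑' u : E, ballTerm T f (s + 2 * η) m u) * (1 - r))
        = (1 - r) * r ^ m * ∑' u : E, ballTerm T f (s + 2 * η) m u := by ring
      _ ≤ ∑' i : n ⁻¹' {m}, ENNReal.ofReal (c i) * (r ^ m * ballTerm T f s (n i) (x i)) :=
          mul_tsum_le_of_le_stratumWeight hE hEw (g := ballTerm T f (s + 2 * η) m)
            (G := fun i => r ^ m * ballTerm T f s (n i) (x i)) fun i hi u hu => by
              subst hi
              exact ballTerm_add_le T hf hu s
      _ = r ^ m * ∑' i : n ⁻¹' {m}, ENNReal.ofReal (c i) * ballTerm T f s (n i) (x i) := by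
          simp_rw [mul_left_comm _ (r ^ m)]
          exact ENNReal.tsum_mul_left
  rw [← ENNReal.div_eq_inv_mul,
    ENNReal.le_div_iff_mul_le (.inl h1r) (.inl (ENNReal.sub_ne_top ENNReal.one_ne_top))]
  exact (ENNReal.mul_le_mul_iff_right hr0 hrtop).1 key

theorem isBowenCover_of_isSeparatedNet [Countable ι] {Z : Set (X 0)} {N : ℕ} (hε : 0 < ε)
    (hcov : IsWeightedCover T N ε Z x n c) {a : ℕ → ℝ≥0∞} (ha0 : ∀ m, a m ≠ 0)
    (ha : ∑' m, a m = 1) {E : ℕ → Set (X 0)}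
    (hE : ∀ m, IsSeparatedNet T m (2 * ε) {z | z ∈ Z ∧ a m ≤ stratumWeight T ε x n c m z} (E m)) :
    IsBowenCover T N (3 * ε) Z {p | p.1 ∈ E p.2} := by
  have hball : ∀ m, ∀ u ∈ E m, ∃ i, n i = m ∧ u ∈ bowenBall T m (x i) ε := fun m u hu =>
    exists_mem_bowenBall_of_stratumWeight_ne_zero (ne_bot_of_le_ne_bot (ha0 m) ((hE m).1 hu).2)
  refine ⟨?_, fun p hp => ?_, fun z hz => ?_⟩
  · have hEc : ∀ m, (E m).Countable := fun m =>
      countable_of_pairwise_of_subset_iUnion_bowenBall T (hE m).2.1 fun u hu =>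
        let ⟨i, _, hi⟩ := hball m u hu
        mem_iUnion.2 ⟨i, hi⟩
    refine (countable_iUnion fun m => (hEc m).image fun u => (u, m)).mono fun p hp => ?_
    exact mem_iUnion.2 ⟨p.2, p.1, hp, rfl⟩
  · obtain ⟨i, hi, -⟩ := hball p.2 p.1 hp
    exact hi ▸ hcov.2.1 i
  · obtain ⟨m, hm⟩ := ENNReal.exists_le_of_one_le_tsum ha
      ((tsum_stratumWeight T ε x n c z).symm ▸ hcov.2.2 z hz)
    obtain ⟨u, hu, hd⟩ := (hE m).2.2 z ⟨hz, hm⟩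
    exact mem_iUnion₂.2 ⟨(u, m), hu, show bowenDist T m u z < 3 * ε by linarith⟩

theorem bowenPreMeas_le_of_isWeightedCover [Countable ι] {Z : Set (X 0)} {N : ℕ} (hε : 0 < ε)
    (hη : 0 < η) (hf : ∀ k, ∀ x y : X k, dist x y < ε → |f k x - f k y| < η) (s : ℝ)
    (hcov : IsWeightedCover T N ε Z x n c) :
    bowenPreMeas T f Z (s + 2 * η) N (3 * ε) ≤ (1 - ENNReal.ofReal (Real.exp (-η)))⁻¹ *
      ∑' i, ENNReal.ofReal (c i) * ballTerm T f s (n i) (x i) := by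
  set r := ENNReal.ofReal (Real.exp (-η))
  have hr : r < 1 := ENNReal.ofReal_exp_neg_lt_one hη
  set a : ℕ → ℝ≥0∞ := fun m => (1 - r) * r ^ m
  have ha0 : ∀ m, a m ≠ 0 := fun m =>
    mul_ne_zero (tsub_pos_of_lt hr).ne' (pow_ne_zero _ (ENNReal.ofReal_pos.2 (Real.exp_pos _)).ne')
  have ha : ∑' m, a m = 1 := by
    rw [ENNReal.tsum_mul_left, ENNReal.tsum_geometric,
      ENNReal.mul_inv_cancel (tsub_pos_of_lt hr).ne' (ENNReal.sub_ne_top ENNReal.one_ne_top)]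
  choose E hE using fun m => exists_isSeparatedNet T m (by linarith : 0 ≤ 2 * ε)
    {z | z ∈ Z ∧ a m ≤ stratumWeight T ε x n c m z}
  calc bowenPreMeas T f Z (s + 2 * η) N (3 * ε)
      ≤ ballSum T f (s + 2 * η) {p | p.1 ∈ E p.2} :=
        iInf₂_le _ (isBowenCover_of_isSeparatedNet hε hcov ha0 ha hE)
    _ = ∑' m, ∑' u : E m, ballTerm T f (s + 2 * η) m u := ballSum_eq_tsum_tsum T f _ E
    _ ≤ ∑' m, (1 - r)⁻¹ * ∑' i : n ⁻¹' {m}, ENNReal.ofReal (c i) * ballTerm T f s (n i) (x i) :=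
        ENNReal.tsum_le_tsum fun m =>
          tsum_ballTerm_le hη hf s (hE m).2.1 fun u hu => ((hE m).1 hu).2
    _ = (1 - r)⁻¹ * ∑' i, ENNReal.ofReal (c i) * ballTerm T f s (n i) (x i) := by
        rw [ENNReal.tsum_mul_left,
          ENNReal.tsum_fiberwise (fun i => ENNReal.ofReal (c i) * ballTerm T f s (n i) (x i)) n]

end KeyEstimate

section Pressures

variable {X : ℕ → Type*} [∀ k, MetricSpace (X k)] (T : ∀ k, X k → X (k + 1))
  (f : ∀ k, X k → ℝ) (Z : Set (X 0))

theorem wMeasPre_le_bowenPreMeas (s : ℝ) (N : ℕ) (ε : ℝ) :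
    wMeasPre T f Z s N ε ≤ bowenPreMeas T f Z s N ε := by
  refine le_iInf₂ fun C ⟨hC, hCN, hZC⟩ => ?_
  have := hC.to_subtype
  let e := (equivShrink.{0} C).symm
  have hwc : IsWeightedCover T N ε Z (fun i => (e i).1.1) (fun i => (e i).1.2) fun _ => 1 := by
    refine ⟨fun _ => one_pos, fun i => hCN _ (e i).2, fun z hz => ?_⟩
    obtain ⟨p, hp, hzp⟩ := mem_iUnion₂.1 (hZC hz)
    refine le_trans ?_ (ENNReal.le_tsum (e.symm ⟨p, hp⟩))
    simp [hzp]
  refine iInf_le_of_le (Shrink C) <| iInf_le_of_le (.of_equiv _ (equivShrink.{0} C)) <|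
    iInf_le_of_le _ <| iInf_le_of_le _ <| iInf_le_of_le _ <| iInf_le_of_le hwc ?_
  rw [ballSum, ← e.tsum_eq]
  simp

theorem PBW_le_PBe (ε : ℝ) : PBW T f Z ε ≤ PBe T f Z ε :=
  crit_mono fun s => iSup_mono fun N => wMeasPre_le_bowenPreMeas T f Z s N ε

theorem bowenPreMeas_anti {ε ε' : ℝ} (h : ε ≤ ε') (s : ℝ) (N : ℕ) :
    bowenPreMeas T f Z s N ε' ≤ bowenPreMeas T f Z s N ε :=
  le_iInf₂ fun C hC =>
    iInf₂_le C ⟨hC.1, hC.2.1, hC.2.2.trans (iUnion₂_mono fun _ _ => bowenBall_mono T h)⟩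

theorem PBe_anti {ε ε' : ℝ} (h : ε ≤ ε') : PBe T f Z ε' ≤ PBe T f Z ε :=
  crit_mono fun s => iSup_mono fun N => bowenPreMeas_anti T f Z h s N

variable {T f} {ε η : ℝ}

theorem bowenMeas_le_mul_wMeas (hε : 0 < ε) (hη : 0 < η)
    (hf : ∀ k, ∀ x y : X k, dist x y < ε → |f k x - f k y| < η) (s : ℝ) :
    bowenMeas T f Z (s + 2 * η) (3 * ε) ≤
      (1 - ENNReal.ofReal (Real.exp (-η)))⁻¹ * wMeas T f Z s ε := by
  have hK0 : (1 - ENNReal.ofReal (Real.exp (-η)))⁻¹ ≠ 0 :=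
    ENNReal.inv_ne_zero.2 (ENNReal.sub_ne_top ENNReal.one_ne_top)
  have hKtop : (1 - ENNReal.ofReal (Real.exp (-η)))⁻¹ ≠ ⊤ :=
    ENNReal.inv_ne_top.2 (tsub_pos_of_lt (ENNReal.ofReal_exp_neg_lt_one hη)).ne'
  rw [bowenMeas, wMeas, ENNReal.mul_iSup]
  refine iSup_mono fun N => ?_
  simp only [wMeasPre, ENNReal.mul_iInf_of_ne hK0 hKtop, le_iInf_iff]
  intro ι _ x n c hcov
  exact bowenPreMeas_le_of_isWeightedCover hε hη hf s hcov

theorem PBe_le_PBW_add (hε : 0 < ε) (hη : 0 < η)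
    (hf : ∀ k, ∀ x y : X k, dist x y < ε → |f k x - f k y| < η) :
    PBe T f Z (3 * ε) ≤ PBW T f Z ε + (2 * η : ℝ) :=
  crit_le_crit_add _ fun s hs => le_antisymm
    ((bowenMeas_le_mul_wMeas Z hε hη hf s).trans_eq (by rw [hs, mul_zero])) bot_le

end Pressures

end NDS

theorem bowen_pressure_via_weighted_covers_general {X : ℕ → Type*} [∀ k, MetricSpace (X k)]
    (T : ∀ k, X k → X (k + 1))
    (f : ∀ k, X k → ℝ) (hfe : NDS.EquicontPotential f)
    (Z : Set (X 0)) :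
    NDS.PB T f Z = ⨆ (ε : ℝ) (_ : 0 < ε), NDS.PBW T f Z ε := by
  refine le_antisymm (iSup₂_le fun ε' hε' => EReal.le_of_forall_pos_le_add_s4 fun d hd => ?_)
    (iSup₂_mono fun ε _ => NDS.PBW_le_PBe T f Z ε)
  obtain ⟨δ, hδ, hfδ⟩ := hfe (d / 2) (half_pos hd)
  set ε := min (ε' / 3) δ
  have hε : 0 < ε := lt_min (by linarith) hδ
  calc NDS.PBe T f Z ε' ≤ NDS.PBe T f Z (3 * ε) :=
        NDS.PBe_anti T f Z (by linarith [min_le_left (ε' / 3) δ])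
    _ ≤ NDS.PBW T f Z ε + (2 * (d / 2) : ℝ) := NDS.PBe_le_PBW_add Z hε (half_pos hd)
          fun k x y h => hfδ k x y (h.trans_le (min_le_right _ _))
    _ ≤ (⨆ (ε : ℝ) (_ : 0 < ε), NDS.PBW T f Z ε) + d := by
        rw [mul_div_cancel₀ d two_ne_zero]
        exact add_le_add_left (le_iSup₂ (f := fun ε (_ : 0 < ε) => NDS.PBW T f Z ε) ε hε) _

/-- For an equicontinuous potential `f`, the Bowen pressure coincides with the
limit as `ε → 0` (a supremum over `ε > 0`, by monotonicity) of the weighted-cover pressures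
`P^{BW}(T,f,Z,ε)`. -/
theorem bowen_pressure_via_weighted_covers {X : ℕ → Type*} [∀ k, MetricSpace (X k)]
    [∀ k, CompactSpace (X k)] (T : ∀ k, X k → X (k + 1)) (hT : ∀ k, Continuous (T k))
    (f : ∀ k, X k → ℝ) (hf : ∀ k, Continuous (f k)) (hfe : NDS.EquicontPotential f)
    (Z : Set (X 0)) :
    NDS.PB T f Z = ⨆ (ε : ℝ) (_ : 0 < ε), NDS.PBW T f Z ε :=
  bowen_pressure_via_weighted_covers_general T f hfe Z
end
end
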